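/- For d = 2, a unit vector ψ ∈ C² with both components nonzero, and 0 < p < 2/3, the maximal reliability equals ½ + ½√((1−2p)² + 4p(2−3p)|ψ₁|²|ψ₂|²); for 2/3 ≤ p < 1 it equals p. -/

import Mathlib

open Matrix
open scoped ComplexOrder

/-!
With `a = ‖ψ 0‖²`, `b = ‖ψ 1‖²`, the reliability is affine in the effect `E`:
`R(E) = (1 - p) + re tr (E M)` for `M = p • diag(a, b) - (1 - p) • |ψ⟩⟨ψ|`, a Hermitian matrix
of trace `2p - 1` and determinant `a b p (3p - 2)`. Over `0 ≤ E ≤ 1`, the maximum of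
`re tr (E M)` is the trace of the positive part `P` of `M`: it is attained at the spectral
projection onto the positive eigenspace, and it bounds every value since
`tr (E M) ≤ tr (E P) ≤ tr P` whenever `P ≥ 0` and `P ≥ M`. For `p ≥ 2/3` the matrix `M` is
positive semidefinite, so the maximum is `tr M = 2p - 1`; for `p < 2/3` its determinant is
negative, so the maximum is its larger eigenvalue.
-/

namespace Matrix

variable {ι : Type*} [Fintype ι]

open scoped MatrixOrder in
theorem PosSemidef.trace_mul_nonneg {𝕜 : Type*} [RCLike 𝕜] {A B : Matrix ι ι 𝕜}
    (hA : A.PosSemidef) (hB : B.PosSemidef) : 0 ≤ (A * B).trace := by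
  classical
  obtain ⟨C, rfl⟩ := CStarAlgebra.nonneg_iff_eq_star_mul_self.mp hB.nonneg
  rw [← Matrix.mul_assoc, trace_mul_cycle, star_eq_conjTranspose]
  exact (hA.mul_mul_conjTranspose_same C).trace_nonneg

theorem posSemidef_fin_two {α β : ℝ} {z : ℂ} (hα : 0 ≤ α) (hβ : 0 ≤ β) (h : ‖z‖ ^ 2 ≤ α * β) :
    (!![(α : ℂ), z; star z, (β : ℂ)]).PosSemidef := by
  refine .of_dotProduct_mulVec_nonneg ?_ fun v => ?_
  · ext i j; fin_cases i <;> fin_cases j <;> simp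
  have hform : star v ⬝ᵥ (!![(α : ℂ), z; star z, (β : ℂ)] *ᵥ v) =
      ((α * ‖v 0‖ ^ 2 + β * ‖v 1‖ ^ 2 + 2 * (star (v 0) * z * v 1).re : ℝ) : ℂ) := by
    have h0 : star (v 0) * v 0 = (‖v 0‖ : ℂ) ^ 2 := by rw [mul_comm]; exact Complex.mul_conj' _
    have h1 : star (v 1) * v 1 = (‖v 1‖ : ℂ) ^ 2 := by rw [mul_comm]; exact Complex.mul_conj' _
    have hre : (((star (v 0) * z * v 1).re : ℝ) : ℂ) * 2 =
        star (v 0) * z * v 1 + star (v 1) * star z * v 0 := by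
      rw [Complex.re_eq_add_conj]; simp only [← Complex.star_def, star_mul', star_star]; ring
    simp only [mulVec, dotProduct, Fin.sum_univ_two, cons_val', cons_val_zero, cons_val_one,
      empty_val', cons_val_fin_one, Pi.star_apply, of_apply]
    push_cast
    linear_combination α * h0 + β * h1 - hre
  have hcross : -(‖v 0‖ * ‖z‖ * ‖v 1‖) ≤ (star (v 0) * z * v 1).re := by
    simpa using neg_le_of_abs_le (Complex.abs_re_le_norm (star (v 0) * z * v 1))
  have hamgm : 2 * (‖v 0‖ * ‖z‖ * ‖v 1‖) ≤ α * ‖v 0‖ ^ 2 + β * ‖v 1‖ ^ 2 := by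
    refine abs_le_of_sq_le_sq' ?_ (by positivity) |>.2
    nlinarith [sq_nonneg (α * ‖v 0‖ ^ 2 - β * ‖v 1‖ ^ 2),
      mul_nonneg (sq_nonneg ‖v 0‖) (sq_nonneg ‖v 1‖)]
  rw [hform, Complex.zero_le_real]
  linarith

variable [DecidableEq ι]

def effectTraceSet (M : Matrix ι ι ℂ) : Set ℝ :=
  {r | ∃ E : Matrix ι ι ℂ, E.PosSemidef ∧ (1 - E).PosSemidef ∧ r = (E * M).trace.re}

theorem isGreatest_effectTraceSet {M E₀ P : Matrix ι ι ℂ} (hE₀ : E₀.PosSemidef)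
    (hE₀' : (1 - E₀).PosSemidef) (hP : P.PosSemidef) (hPM : (P - M).PosSemidef)
    (h : (E₀ * M).trace = P.trace) : IsGreatest (effectTraceSet M) P.trace.re := by
  refine ⟨⟨E₀, hE₀, hE₀', by rw [h]⟩, ?_⟩
  rintro _ ⟨E, hE, hE', rfl⟩
  have h₁ := Complex.nonneg_iff.mp (hE.trace_mul_nonneg hPM)
  have h₂ := Complex.nonneg_iff.mp (hE'.trace_mul_nonneg hP)
  simp only [Matrix.mul_sub, Matrix.sub_mul, Matrix.one_mul, trace_sub, Complex.sub_re] at h₁ h₂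
  linarith [h₁.1, h₂.1]

theorem isGreatest_effectTraceSet_of_posSemidef {M : Matrix ι ι ℂ} (hM : M.PosSemidef) :
    IsGreatest (effectTraceSet M) M.trace.re :=
  isGreatest_effectTraceSet .one (by simpa using PosSemidef.zero) hM
    (by simpa using PosSemidef.zero) (by rw [Matrix.one_mul])

/-- If `M` has the eigenvalues `ν ≤ 0 ≤ μ` only, `μ` being simple, the optimal effect is the
spectral projection `(μ - ν)⁻¹ • (M - ν • 1)` onto the `μ`-eigenline. -/
theorem isGreatest_effectTraceSet_of_eigenvalues {M : Matrix ι ι ℂ} {μ ν : ℝ} (hν : ν ≤ 0)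
    (hμ : 0 ≤ μ) (hνμ : ν < μ) (hlow : (M - ν • 1).PosSemidef) (hupp : (μ • 1 - M).PosSemidef)
    (hroots : (M - ν • 1) * (M - μ • 1) = 0) (htr : (M - ν • 1).trace = ((μ - ν : ℝ) : ℂ)) :
    IsGreatest (effectTraceSet M) μ := by
  have hgap : μ - ν ≠ 0 := sub_ne_zero.2 hνμ.ne'
  set E₀ := (μ - ν)⁻¹ • (M - ν • 1) with hE₀_def
  have hE₀ : E₀.PosSemidef := hlow.smul (inv_nonneg.2 (sub_nonneg.2 hνμ.le))
  have hcompl : 1 - E₀ = (μ - ν)⁻¹ • (μ • 1 - M) := by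
    linear_combination (norm := module) -(inv_mul_cancel₀ hgap) • (1 : Matrix ι ι ℂ)
  have hE₀' : (1 - E₀).PosSemidef := hcompl ▸ hupp.smul (inv_nonneg.2 (sub_nonneg.2 hνμ.le))
  have hPM : μ • E₀ - M = (-ν) • (1 - E₀) := by
    linear_combination (norm := module) (mul_inv_cancel₀ hgap) • (M - ν • (1 : Matrix ι ι ℂ))
  have hE₀M : E₀ * M = μ • E₀ := by
    have hM : (M - ν • 1) * M = μ • (M - ν • (1 : Matrix ι ι ℂ)) := by
      calc (M - ν • 1) * M = (M - ν • 1) * (M - μ • 1) + μ • (M - ν • 1) := by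
            rw [Matrix.mul_sub, mul_smul_comm, Matrix.mul_one]; abel
        _ = μ • (M - ν • 1) := by rw [hroots, zero_add]
    rw [hE₀_def, smul_mul_assoc, hM, smul_comm]
  have htrE₀ : E₀.trace = 1 := by
    rw [hE₀_def, trace_smul, htr, Complex.real_smul, ← Complex.ofReal_mul, inv_mul_cancel₀ hgap,
      Complex.ofReal_one]
  have hgreatest := isGreatest_effectTraceSet hE₀ hE₀' (hE₀.smul hμ)
    (hPM ▸ hE₀'.smul (neg_nonneg.2 hν)) (by rw [hE₀M])
  simpa [trace_smul, htrE₀] using hgreatest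

theorem isGreatest_effectTraceSet_fin_two {α β : ℝ} {z : ℂ} (h : α * β < ‖z‖ ^ 2) :
    IsGreatest (effectTraceSet !![(α : ℂ), z; star z, (β : ℂ)])
      ((α + β + √((α - β) ^ 2 + 4 * ‖z‖ ^ 2)) / 2) := by
  set M : Matrix (Fin 2) (Fin 2) ℂ := !![(α : ℂ), z; star z, (β : ℂ)]
  set S := √((α - β) ^ 2 + 4 * ‖z‖ ^ 2)
  have hS2 : S ^ 2 = (α - β) ^ 2 + 4 * ‖z‖ ^ 2 := Real.sq_sqrt (by positivity)
  obtain ⟨hSsum₁, hSsum₂⟩ : -S < α + β ∧ α + β < S :=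
    abs_lt_of_sq_lt_sq' (by nlinarith) (Real.sqrt_nonneg _)
  obtain ⟨hSdiff₁, hSdiff₂⟩ : -S ≤ α - β ∧ α - β ≤ S :=
    abs_le_of_sq_le_sq' (by nlinarith) (Real.sqrt_nonneg _)
  set μ := (α + β + S) / 2 with hμ
  set ν := (α + β - S) / 2 with hν
  have hlow : (M - ν • (1 : Matrix (Fin 2) (Fin 2) ℂ)).PosSemidef := by
    have : M - ν • 1 = !![((α - ν : ℝ) : ℂ), z; star z, ((β - ν : ℝ) : ℂ)] := by
      ext i j; fin_cases i <;> fin_cases j <;> simp [M, Complex.real_smul]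
    rw [this]
    exact posSemidef_fin_two (by linarith) (by linarith) (le_of_eq (by linear_combination -hS2 / 4))
  have hupp : (μ • (1 : Matrix (Fin 2) (Fin 2) ℂ) - M).PosSemidef := by
    have : μ • 1 - M = !![((μ - α : ℝ) : ℂ), -z; star (-z), ((μ - β : ℝ) : ℂ)] := by
      ext i j; fin_cases i <;> fin_cases j <;> simp [M, Complex.real_smul]
    rw [this]
    exact posSemidef_fin_two (by linarith) (by linarith)
      (le_of_eq (by rw [norm_neg]; linear_combination -hS2 / 4))
  have hroots : (M - ν • (1 : Matrix (Fin 2) (Fin 2) ℂ)) * (M - μ • 1) = 0 := by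
    have hz : z * starRingEnd ℂ z = (‖z‖ : ℂ) ^ 2 := Complex.mul_conj' z
    have hS2' : (S : ℂ) ^ 2 = ((α : ℂ) - β) ^ 2 + 4 * (‖z‖ : ℂ) ^ 2 := by exact_mod_cast hS2
    ext i j; fin_cases i <;> fin_cases j <;>
      simp [mul_apply, Fin.sum_univ_two, M, Complex.real_smul, hμ, hν]
    · linear_combination hz - hS2' / 4
    · ring
    · ring
    · linear_combination hz - hS2' / 4
  have htr : (M - ν • (1 : Matrix (Fin 2) (Fin 2) ℂ)).trace = ((μ - ν : ℝ) : ℂ) := by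
    simp only [trace_sub, trace_smul, trace_one, trace_fin_two, M, of_apply, cons_val',
      cons_val_zero, cons_val_one, empty_val', cons_val_fin_one, Fintype.card_fin,
      Complex.real_smul, hμ, hν]
    push_cast
    ring
  exact isGreatest_effectTraceSet_of_eigenvalues (by linarith) (by linarith) (by linarith)
    hlow hupp hroots htr

end Matrix

section Reliability

variable {ι : Type*} [Fintype ι] [DecidableEq ι]

noncomputable def reliabilityMatrix (ψ : ι → ℂ) (p : ℝ) : Matrix ι ι ℂ :=
  (p : ℂ) • diagonal (fun k => ((‖ψ k‖ ^ 2 : ℝ) : ℂ)) - (1 - (p : ℂ)) • vecMulVec ψ (star ψ)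

noncomputable def reliability (ψ : ι → ℂ) (p : ℝ) (E : Matrix ι ι ℂ) : ℝ :=
  ((p : ℂ) * (star ψ ⬝ᵥ (diagonal (fun k => E k k) *ᵥ ψ)) +
    ((1 : ℂ) - (p : ℂ)) * (star ψ ⬝ᵥ ((1 - E) *ᵥ ψ))).re

theorem reliability_eq (ψ : ι → ℂ) (p : ℝ) (E : Matrix ι ι ℂ) :
    reliability ψ p E = (1 - p) * ∑ k, ‖ψ k‖ ^ 2 + (E * reliabilityMatrix ψ p).trace.re := by
  have hnorm : ∀ k, star (ψ k) * ψ k = ((‖ψ k‖ ^ 2 : ℝ) : ℂ) := fun k => by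
    rw [mul_comm]; push_cast; exact Complex.mul_conj' _
  have hdiag : star ψ ⬝ᵥ (diagonal (fun k => E k k) *ᵥ ψ) =
      (E * diagonal (fun k => ((‖ψ k‖ ^ 2 : ℝ) : ℂ))).trace := by
    simp only [dotProduct, mulVec_diagonal, trace, diag, mul_diagonal, Pi.star_apply, ← hnorm]
    exact Finset.sum_congr rfl fun k _ => by ring
  have hproj : star ψ ⬝ᵥ (E *ᵥ ψ) = (E * vecMulVec ψ (star ψ)).trace := by
    simp only [dotProduct, mulVec, trace, diag, mul_apply, vecMulVec_apply, Finset.mul_sum,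
      Pi.star_apply]
    exact Finset.sum_congr rfl fun i _ => Finset.sum_congr rfl fun j _ => by ring
  have hself : star ψ ⬝ᵥ ψ = ((∑ k, ‖ψ k‖ ^ 2 : ℝ) : ℂ) := by
    simp only [dotProduct, Pi.star_apply, hnorm, Complex.ofReal_sum]
  rw [reliability, sub_mulVec, one_mulVec, dotProduct_sub, hdiag, hproj, hself, reliabilityMatrix,
    Matrix.mul_sub, mul_smul_comm, mul_smul_comm, trace_sub, trace_smul, trace_smul, smul_eq_mul,
    smul_eq_mul, ← Complex.ofReal_re ((1 - p) * ∑ k, ‖ψ k‖ ^ 2), ← Complex.add_re]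
  congr 1
  push_cast
  ring

def reliabilitySet (ψ : ι → ℂ) (p : ℝ) : Set ℝ :=
  {r | ∃ E : Matrix ι ι ℂ, E.PosSemidef ∧ (1 - E).PosSemidef ∧ r = reliability ψ p E}

theorem isGreatest_reliabilitySet {ψ : ι → ℂ} (hψ : ∑ k, ‖ψ k‖ ^ 2 = 1) {p v : ℝ}
    (h : IsGreatest (effectTraceSet (reliabilityMatrix ψ p)) v) :
    IsGreatest (reliabilitySet ψ p) (1 - p + v) := by
  obtain ⟨⟨E, hE, hE', rfl⟩, hbound⟩ := h
  refine ⟨⟨E, hE, hE', by rw [reliability_eq, hψ, mul_one]⟩, ?_⟩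
  rintro _ ⟨F, hF, hF', rfl⟩
  rw [reliability_eq, hψ, mul_one]
  linarith [hbound ⟨F, hF, hF', rfl⟩]

theorem reliabilityMatrix_fin_two (ψ : Fin 2 → ℂ) (p : ℝ) :
    reliabilityMatrix ψ p =
      !![(((2 * p - 1) * ‖ψ 0‖ ^ 2 : ℝ) : ℂ), ((p - 1 : ℝ) : ℂ) * (ψ 0 * star (ψ 1));
        star (((p - 1 : ℝ) : ℂ) * (ψ 0 * star (ψ 1))), (((2 * p - 1) * ‖ψ 1‖ ^ 2 : ℝ) : ℂ)] := by
  ext i j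
  fin_cases i <;> fin_cases j <;>
    simp [reliabilityMatrix, vecMulVec_apply, star_mul', Complex.mul_conj'] <;> ring

theorem norm_sq_ofReal_mul_mul_star (c : ℝ) (w w' : ℂ) :
    ‖(c : ℂ) * (w * star w')‖ ^ 2 = c ^ 2 * (‖w‖ ^ 2 * ‖w'‖ ^ 2) := by
  simp only [norm_mul, Complex.norm_real, Real.norm_eq_abs, norm_star, mul_pow, sq_abs]

theorem isGreatest_reliabilitySet_fin_two_of_lt {ψ : Fin 2 → ℂ} (hψ : ∑ k, ‖ψ k‖ ^ 2 = 1)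
    (hψk : ∀ k, ψ k ≠ 0) {p : ℝ} (hp0 : 0 < p) (hp : p < 2 / 3) :
    IsGreatest (reliabilitySet ψ p) (1 / 2 + 1 / 2 * √((1 - 2 * p) ^ 2 +
      4 * p * (2 - 3 * p) * ‖ψ 0‖ ^ 2 * ‖ψ 1‖ ^ 2)) := by
  have hsum : ‖ψ 0‖ ^ 2 + ‖ψ 1‖ ^ 2 = 1 := by simpa [Fin.sum_univ_two] using hψ
  have hab : 0 < ‖ψ 0‖ ^ 2 * ‖ψ 1‖ ^ 2 := by
    have := hψk 0; have := hψk 1; positivity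
  have hdet : (2 * p - 1) * ‖ψ 0‖ ^ 2 * ((2 * p - 1) * ‖ψ 1‖ ^ 2) <
      ‖((p - 1 : ℝ) : ℂ) * (ψ 0 * star (ψ 1))‖ ^ 2 := by
    rw [norm_sq_ofReal_mul_mul_star]
    nlinarith [mul_pos hab (mul_pos hp0 (by linarith : 0 < 2 - 3 * p))]
  have hmax := isGreatest_effectTraceSet_fin_two hdet
  rw [← reliabilityMatrix_fin_two, norm_sq_ofReal_mul_mul_star] at hmax
  convert isGreatest_reliabilitySet hψ hmax using 1
  have hdisc : ((2 * p - 1) * ‖ψ 0‖ ^ 2 - (2 * p - 1) * ‖ψ 1‖ ^ 2) ^ 2 +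
      4 * ((p - 1) ^ 2 * (‖ψ 0‖ ^ 2 * ‖ψ 1‖ ^ 2)) =
      (1 - 2 * p) ^ 2 + 4 * p * (2 - 3 * p) * ‖ψ 0‖ ^ 2 * ‖ψ 1‖ ^ 2 := by
    linear_combination (2 * p - 1) ^ 2 * (‖ψ 0‖ ^ 2 + ‖ψ 1‖ ^ 2 + 1) * hsum
  rw [hdisc]
  linear_combination -(2 * p - 1) / 2 * hsum

theorem isGreatest_reliabilitySet_fin_two_of_le {ψ : Fin 2 → ℂ} (hψ : ∑ k, ‖ψ k‖ ^ 2 = 1)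
    {p : ℝ} (hp : 2 / 3 ≤ p) : IsGreatest (reliabilitySet ψ p) p := by
  have hsum : ‖ψ 0‖ ^ 2 + ‖ψ 1‖ ^ 2 = 1 := by simpa [Fin.sum_univ_two] using hψ
  have hp' : 0 ≤ 2 * p - 1 := by linarith
  have hdet : ‖((p - 1 : ℝ) : ℂ) * (ψ 0 * star (ψ 1))‖ ^ 2 ≤
      (2 * p - 1) * ‖ψ 0‖ ^ 2 * ((2 * p - 1) * ‖ψ 1‖ ^ 2) := by
    have : 0 ≤ p * (3 * p - 2) * (‖ψ 0‖ ^ 2 * ‖ψ 1‖ ^ 2) := by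
      have : 0 ≤ 3 * p - 2 := by linarith
      positivity
    rw [norm_sq_ofReal_mul_mul_star]
    linarith
  have hM : (reliabilityMatrix ψ p).PosSemidef := by
    rw [reliabilityMatrix_fin_two]
    exact posSemidef_fin_two (by positivity) (by positivity) hdet
  convert isGreatest_reliabilitySet hψ (isGreatest_effectTraceSet_of_posSemidef hM) using 1
  rw [reliabilityMatrix_fin_two]
  simp only [trace_fin_two, of_apply, cons_val', cons_val_zero, cons_val_one, empty_val',
    cons_val_fin_one, Complex.add_re, Complex.ofReal_re]
  linear_combination -(2 * p - 1) * hsum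

end Reliability

theorem stmt_12_general (ψ : Fin 2 → ℂ)
    (hψ : ∑ k, ‖ψ k‖ ^ 2 = 1) (hψk : ∀ k, ψ k ≠ 0)
    (p : ℝ) (hp0 : 0 < p) :
    (p < 2 / 3 →
      sSup {r : ℝ | ∃ E : Matrix (Fin 2) (Fin 2) ℂ, E.PosSemidef ∧ (1 - E).PosSemidef ∧
        r = ((p : ℂ) * (star ψ ⬝ᵥ (Matrix.diagonal (fun k => E k k) *ᵥ ψ)) +
          ((1 : ℂ) - (p : ℂ)) * (star ψ ⬝ᵥ ((1 - E) *ᵥ ψ))).re} =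
      1 / 2 + 1 / 2 * Real.sqrt ((1 - 2 * p) ^ 2 +
        4 * p * (2 - 3 * p) * ‖ψ 0‖ ^ 2 * ‖ψ 1‖ ^ 2)) ∧
    (2 / 3 ≤ p →
      sSup {r : ℝ | ∃ E : Matrix (Fin 2) (Fin 2) ℂ, E.PosSemidef ∧ (1 - E).PosSemidef ∧
        r = ((p : ℂ) * (star ψ ⬝ᵥ (Matrix.diagonal (fun k => E k k) *ᵥ ψ)) +
          ((1 : ℂ) - (p : ℂ)) * (star ψ ⬝ᵥ ((1 - E) *ᵥ ψ))).re} = p) :=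
  ⟨fun hp => (isGreatest_reliabilitySet_fin_two_of_lt hψ hψk hp0 hp).csSup_eq,
    fun hp => (isGreatest_reliabilitySet_fin_two_of_le hψ hp).csSup_eq⟩

/-- maximal reliability in dimension d = 2. -/
theorem stmt_12 (ψ : Fin 2 → ℂ)
    (hψ : ∑ k, ‖ψ k‖ ^ 2 = 1) (hψk : ∀ k, ψ k ≠ 0)
    (p : ℝ) (hp0 : 0 < p) (hp1 : p < 1) :
    (p < 2 / 3 →
      sSup {r : ℝ | ∃ E : Matrix (Fin 2) (Fin 2) ℂ, E.PosSemidef ∧ (1 - E).PosSemidef ∧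
        r = ((p : ℂ) * (star ψ ⬝ᵥ (Matrix.diagonal (fun k => E k k) *ᵥ ψ)) +
          ((1 : ℂ) - (p : ℂ)) * (star ψ ⬝ᵥ ((1 - E) *ᵥ ψ))).re} =
      1 / 2 + 1 / 2 * Real.sqrt ((1 - 2 * p) ^ 2 +
        4 * p * (2 - 3 * p) * ‖ψ 0‖ ^ 2 * ‖ψ 1‖ ^ 2)) ∧
    (2 / 3 ≤ p →
      sSup {r : ℝ | ∃ E : Matrix (Fin 2) (Fin 2) ℂ, E.PosSemidef ∧ (1 - E).PosSemidef ∧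
        r = ((p : ℂ) * (star ψ ⬝ᵥ (Matrix.diagonal (fun k => E k k) *ᵥ ψ)) +
          ((1 : ℂ) - (p : ℂ)) * (star ψ ⬝ᵥ ((1 - E) *ᵥ ψ))).re} = p) :=
  stmt_12_general ψ hψ hψk p hp0
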